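/- arXiv:1307.1915 — 5 statements merged into one kernel-verified Lean document; each statement's English description precedes it below -/
import Mathlib

section
/- Let Q be an instance of the FIFO stack-up problem with n bins and let (b_{π(1)}, …, b_{π(n)}) be the order in which the bins are removed during some processing of Q that uses at most p stack-up places. Suppose that at the configuration reached just before step i, the bin b_{π(l)} with l > i is the first bin of its remaining sequence and its pallet plt(b_{π(l)}) is already open. Then the modified removal order (b_{π(1)}, …, b_{π(i-1)}, b_{π(l)}, b_{π(i)}, …, b_{π(l-1)}, b_{π(l+1)}, …, b_{π(n)}) is also a processing of Q, and in each of its configurations at most p pallets are open. -/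
/-- The configuration of the remaining queues after the bins in `removed`
have been removed from the fronts of the queues of `Q`. -/
def confAfter {B : Type} [DecidableEq B] (Q : List (List B)) (removed : List B) :
    List (List B) :=
  Q.map fun q => q.dropWhile fun b => decide (b ∈ removed)

/-- `ord` is the removal order of a processing of the instance `Q`:
it is a permutation of all bins, and at every step the removed bin is the
first bin of one of the remaining sequences. -/
def IsProcessing {B : Type} [DecidableEq B] (Q : List (List B)) (ord : List B) : Prop :=
  ord.Perm Q.flatten ∧
  ∀ i (hi : i < ord.length),
    ∃ q ∈ confAfter Q (ord.take i), q.head? = some ord[i]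

/-- The set of pallets that are open after the bins in `removed` have been removed:
some bin of the pallet has been removed and some bin of the pallet remains. -/
def openAfter {B P : Type} [DecidableEq B] (Q : List (List B)) (plt : B → P)
    (removed : List B) : Set P :=
  {t | (∃ b ∈ removed, plt b = t) ∧
       ∃ q ∈ confAfter Q removed, ∃ b ∈ q, plt b = t}

/-- The processing `ord` of `Q` uses at most `p` stack-up places: in every
configuration during the processing at most `p` pallets are open. -/
def UsesAtMost {B P : Type} [DecidableEq B] (Q : List (List B)) (plt : B → P)
    (ord : List B) (p : ℕ) : Prop :=
  ∀ i ≤ ord.length, (openAfter Q plt (ord.take i)).ncard ≤ p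

/-- The set of pallet labels of the instance `Q`. -/
def pltsOf {B P : Type} (Q : List (List B)) (plt : B → P) : Set P :=
  {t | ∃ q ∈ Q, ∃ b ∈ q, plt b = t}

/-- Every pallet of the instance has at least two bins in the sequences of `Q`. -/
def EveryPalletTwoBins {B P : Type} (Q : List (List B)) (plt : B → P) : Prop :=
  ∀ t ∈ pltsOf Q plt, ∃ b₁ b₂, b₁ ≠ b₂ ∧ b₁ ∈ Q.flatten ∧ b₂ ∈ Q.flatten ∧
    plt b₁ = t ∧ plt b₂ = t

/-- The arc relation of the sequence graph `G_Q`: there is an arc `(u,v)` iff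
`u ≠ v` and in some sequence of `Q` a bin with label `u` occurs at an earlier
position than a bin with label `v`. -/
def seqArc {B P : Type} (Q : List (List B)) (plt : B → P) (u v : P) : Prop :=
  u ≠ v ∧ ∃ q ∈ Q, ∃ i j : ℕ, i < j ∧
    (∃ b, q[i]? = some b ∧ plt b = u) ∧ (∃ b', q[j]? = some b' ∧ plt b' = v)

/-- `X` is a directed path-decomposition of the digraph with vertex set `Vs`
and arc relation `A`. -/
def IsDPD {V : Type} (A : V → V → Prop) (Vs : Set V) (X : List (Set V)) : Prop :=
  (∀ C ∈ X, C ⊆ Vs) ∧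
  (∀ v ∈ Vs, ∃ i, ∃ hi : i < X.length, v ∈ X[i]) ∧
  (∀ u v, A u v → ∃ i j, i ≤ j ∧ ∃ hi : i < X.length, ∃ hj : j < X.length,
      u ∈ X[i] ∧ v ∈ X[j]) ∧
  (∀ v i j l, i ≤ l → l ≤ j →
    ∀ hi : i < X.length, ∀ hj : j < X.length, ∀ hl : l < X.length,
      v ∈ X[i] → v ∈ X[j] → v ∈ X[l])

/-!
Moving `x` forward past the bins `A` is a composition of adjacent transpositions `a x ↦ x a`, each
made while `x` is the first bin of its remaining sequence and some bin of `plt x` has already been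
removed; both properties persist as the removed prefix grows. A transposition keeps a processing a
processing, since `a` is still a front bin once `x` has been removed ahead of it, and it changes a
single configuration: the one after `pre ++ [x]` replaces the one after `pre ++ [a]`. Its open
pallets are among those open after `pre`, because `plt x` was already started there and removing
bins can only exhaust pallets.
-/

namespace List

variable {α : Type*} {p p' : α → Bool}

theorem dropWhile_eq_cons_of_imp (hpp' : ∀ c, p c → p' c) {b : α} (hb : p' b = false) :
    ∀ {q t : List α}, q.dropWhile p = b :: t → q.dropWhile p' = b :: t
  | [], _, h => by simp at h
  | c :: q, t, h => by
    by_cases hc : p c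
    · rw [dropWhile_cons_of_pos hc] at h
      rw [dropWhile_cons_of_pos (hpp' c hc)]
      exact dropWhile_eq_cons_of_imp hpp' hb h
    · rw [dropWhile_cons_of_neg hc] at h
      obtain ⟨rfl, rfl⟩ := cons.inj h
      rw [dropWhile_cons_of_neg (by simp [hb])]

theorem dropWhile_suffix_dropWhile_of_imp (hpp' : ∀ c, p c → p' c) :
    ∀ q : List α, q.dropWhile p' <:+ q.dropWhile p
  | [] => by simp
  | c :: q => by
    by_cases hc : p c
    · rw [dropWhile_cons_of_pos hc, dropWhile_cons_of_pos (hpp' c hc)]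
      exact dropWhile_suffix_dropWhile_of_imp hpp' q
    · rw [dropWhile_cons_of_neg hc]
      exact dropWhile_suffix p'

theorem take_perm_take_swap (pre suf : List α) (x a : α) {j : ℕ} (hj : j ≠ pre.length + 1) :
    ((pre ++ x :: a :: suf).take j).Perm ((pre ++ a :: x :: suf).take j) := by
  rw [take_append, take_append]
  refine Perm.append_left _ ?_
  rcases h : j - pre.length with _ | _ | m
  · simp
  · omega
  · exact Perm.swap _ _ _

theorem getElem?_swap_of_ne (pre suf : List α) (x a : α) {j : ℕ} (hj : j ≠ pre.length)
    (hj' : j ≠ pre.length + 1) : (pre ++ x :: a :: suf)[j]? = (pre ++ a :: x :: suf)[j]? := by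
  simp only [getElem?_append]
  split_ifs
  · rfl
  rcases h : j - pre.length with _ | _ | m
  · omega
  · omega
  · rfl

end List

section Configurations

variable {B P : Type} [DecidableEq B] {Q : List (List B)} {plt : B → P} {r r' : List B} {b x : B}

def IsFrontAfter (Q : List (List B)) (r : List B) (b : B) : Prop :=
  ∃ q ∈ confAfter Q r, q.head? = some b

theorem confAfter_perm (h : r.Perm r') : confAfter Q r = confAfter Q r' := by
  simp only [confAfter, h.mem_iff]

theorem openAfter_perm (h : r.Perm r') : openAfter Q plt r = openAfter Q plt r' := by
  simp only [openAfter, confAfter_perm h, h.mem_iff]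

theorem IsFrontAfter.perm (hb : IsFrontAfter Q r b) (h : r.Perm r') : IsFrontAfter Q r' b := by
  rwa [IsFrontAfter, ← confAfter_perm h]

theorem IsFrontAfter.notMem (hb : IsFrontAfter Q r b) : b ∉ r := by
  obtain ⟨_, hq, hhead⟩ := hb
  obtain ⟨q, -, rfl⟩ := List.mem_map.mp hq
  simpa [hhead] using List.head?_dropWhile_not (fun c => decide (c ∈ r)) q

theorem IsFrontAfter.mono (hb : IsFrontAfter Q r b) (hrr' : r ⊆ r') (hbr' : b ∉ r') :
    IsFrontAfter Q r' b := by
  obtain ⟨_, hq, hhead⟩ := hb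
  obtain ⟨q, hqQ, rfl⟩ := List.mem_map.mp hq
  obtain ⟨t, ht⟩ := List.head?_eq_some_iff.mp hhead
  refine ⟨b :: t, List.mem_map.mpr ⟨q, hqQ, ?_⟩, rfl⟩
  exact List.dropWhile_eq_cons_of_imp (fun c hc => by simpa using hrr' (by simpa using hc))
    (by simpa using hbr') ht

theorem exists_mem_confAfter_of_subset (hrr' : r ⊆ r') {q' : List B}
    (hq' : q' ∈ confAfter Q r') (hb : b ∈ q') : ∃ q ∈ confAfter Q r, b ∈ q := by
  obtain ⟨q, hqQ, rfl⟩ := List.mem_map.mp hq'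
  refine ⟨_, List.mem_map.mpr ⟨q, hqQ, rfl⟩, ?_⟩
  exact (List.dropWhile_suffix_dropWhile_of_imp
    (fun c hc => by simpa using hrr' (by simpa using hc)) q).mem hb

theorem openAfter_finite (Q : List (List B)) (plt : B → P) (r : List B) :
    (openAfter Q plt r).Finite :=
  (r.finite_toSet.image plt).subset fun _ ⟨⟨b, hb, hbt⟩, _⟩ => ⟨b, hb, hbt⟩

theorem openAfter_concat_subset (hx : ∃ b ∈ r, plt b = plt x) :
    openAfter Q plt (r ++ [x]) ⊆ openAfter Q plt r := by
  rintro t ⟨⟨b, hb, rfl⟩, q', hq', c, hc, hct⟩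
  obtain ⟨q, hq, hcq⟩ := exists_mem_confAfter_of_subset (List.subset_append_left _ _) hq' hc
  refine ⟨?_, q, hq, c, hcq, hct⟩
  rcases List.mem_append.mp hb with hb | hb
  · exact ⟨b, hb, rfl⟩
  · rw [List.mem_singleton.mp hb]
    exact hx

end Configurations

section Processing

variable {B P : Type} [DecidableEq B] {Q : List (List B)} {plt : B → P} {p : ℕ}
  {pre suf : List B} {a x : B}

theorem IsProcessing.isFrontAfter {ord u v : List B} {b : B} (h : IsProcessing Q ord)
    (hord : ord = u ++ b :: v) : IsFrontAfter Q u b := by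
  subst hord
  have hb : IsFrontAfter Q _ _ := h.2 u.length (by simp)
  simpa using hb

theorem IsProcessing.swap (h : IsProcessing Q (pre ++ a :: x :: suf))
    (hx : IsFrontAfter Q pre x) : IsProcessing Q (pre ++ x :: a :: suf) := by
  refine ⟨(List.Perm.append_left pre (List.Perm.swap a x suf)).trans h.1,
    fun j hj => show IsFrontAfter Q _ _ from ?_⟩
  by_cases hjx : j = pre.length
  · subst hjx
    simpa using hx
  by_cases hja : j = pre.length + 1
  · subst hja
    have ha : IsFrontAfter Q pre a := h.isFrontAfter rfl
    have hxa : x ∉ pre ++ [a] := (h.isFrontAfter (v := suf) (by simp)).notMem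
    have hax : a ≠ x := fun hax => hxa (by simp [hax])
    simpa [List.take_append, List.take_of_length_le] using
      ha.mono (List.subset_append_left _ _) (by simp [ha.notMem, hax])
  have hlen : j < (pre ++ a :: x :: suf).length := by simpa using hj
  have hget : (pre ++ x :: a :: suf)[j] = (pre ++ a :: x :: suf)[j] := by
    simpa [List.getElem?_eq_getElem hj, List.getElem?_eq_getElem hlen] using
      List.getElem?_swap_of_ne pre suf x a hjx hja
  rw [hget]
  exact IsFrontAfter.perm (h.2 j hlen) (List.take_perm_take_swap pre suf x a hja).symm

theorem UsesAtMost.swap (h : UsesAtMost Q plt (pre ++ a :: x :: suf) p)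
    (hx : ∃ b ∈ pre, plt b = plt x) : UsesAtMost Q plt (pre ++ x :: a :: suf) p := by
  intro j hj
  have hlen : j ≤ (pre ++ a :: x :: suf).length := by simpa using hj
  by_cases hja : j = pre.length + 1
  · subst hja
    calc (openAfter Q plt ((pre ++ x :: a :: suf).take (pre.length + 1))).ncard
        ≤ (openAfter Q plt pre).ncard := by
          simpa [List.take_append, List.take_of_length_le] using
            Set.ncard_le_ncard (openAfter_concat_subset hx) (openAfter_finite Q plt pre)
      _ ≤ p := by simpa using h pre.length (by simp)
  rw [openAfter_perm (List.take_perm_take_swap pre suf x a hja)]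
  exact h j hlen

variable {T A C : List B}

theorem IsProcessing.move_forward (h : IsProcessing Q (T ++ A ++ x :: C))
    (hx : IsFrontAfter Q T x) : IsProcessing Q (T ++ x :: (A ++ C)) := by
  induction A generalizing T with
  | nil => simpa using h
  | cons a A ih =>
    have hxa : x ∉ T ++ [a] := fun hmem =>
      (h.isFrontAfter rfl).notMem (by simp at hmem ⊢; tauto)
    have h' : IsProcessing Q (T ++ a :: x :: (A ++ C)) := by
      simpa using ih (T := T ++ [a]) (by simpa using h) (hx.mono (List.subset_append_left _ _) hxa)
    exact h'.swap hx

theorem UsesAtMost.move_forward (h : UsesAtMost Q plt (T ++ A ++ x :: C) p)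
    (hx : ∃ b ∈ T, plt b = plt x) : UsesAtMost Q plt (T ++ x :: (A ++ C)) p := by
  induction A generalizing T with
  | nil => simpa using h
  | cons a A ih =>
    obtain ⟨b, hb, hbx⟩ := hx
    have h' : UsesAtMost Q plt (T ++ a :: x :: (A ++ C)) p := by
      simpa using ih (T := T ++ [a]) (by simpa using h) ⟨b, by simp [hb], hbx⟩
    exact h'.swap ⟨b, hb, hbx⟩

end Processing

theorem fifo_priority_rule_general {B P : Type} [DecidableEq B]
    (Q : List (List B)) (plt : B → P)
    (ord : List B) (p : ℕ)
    (hproc : IsProcessing Q ord) (hp : UsesAtMost Q plt ord p)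
    (i l : ℕ) (hl : l < ord.length)
    (hfront : ∃ q ∈ confAfter Q (ord.take i), q.head? = some ord[l])
    (hopen : plt ord[l] ∈ openAfter Q plt (ord.take i)) :
    IsProcessing Q (ord.take i ++ ord[l] :: (ord.drop i).erase ord[l]) ∧
    UsesAtMost Q plt (ord.take i ++ ord[l] :: (ord.drop i).erase ord[l]) p := by
  have hmem := List.getElem_mem hl
  generalize ord[l] = x at hmem hfront hopen ⊢
  have hfront' : IsFrontAfter Q (ord.take i) x := hfront
  have hx : x ∈ ord.drop i := by
    rw [← List.take_append_drop i ord, List.mem_append] at hmem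
    exact hmem.resolve_left hfront'.notMem
  obtain ⟨A, C, hAC⟩ := List.append_of_mem hx
  have hord : ord = ord.take i ++ A ++ x :: C := by
    rw [List.append_assoc, ← hAC, List.take_append_drop]
  have hxA : x ∉ A := fun hxA =>
    (hproc.isFrontAfter hord).notMem (List.mem_append_right _ hxA)
  rw [hAC, List.erase_append_right _ hxA, List.erase_cons_head]
  rw [hord] at hproc hp
  exact ⟨hproc.move_forward hfront', hp.move_forward hopen.1⟩

/-- If during a processing of `Q` with at most `p` open pallets
the bin `ord[l]` (with `l > i`) is, in the configuration reached just before
step `i`, the first bin of its remaining sequence and its pallet is already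
open, then moving the removal of `ord[l]` forward to position `i` again yields
a processing of `Q` in each of whose configurations at most `p` pallets are
open. -/
theorem fifo_priority_rule {B P : Type} [DecidableEq B]
    (Q : List (List B)) (plt : B → P) (hnd : Q.flatten.Nodup)
    (ord : List B) (p : ℕ)
    (hproc : IsProcessing Q ord) (hp : UsesAtMost Q plt ord p)
    (i l : ℕ) (hil : i < l) (hl : l < ord.length)
    (hfront : ∃ q ∈ confAfter Q (ord.take i), q.head? = some ord[l])
    (hopen : plt ord[l] ∈ openAfter Q plt (ord.take i)) :
    IsProcessing Q (ord.take i ++ ord[l] :: (ord.drop i).erase ord[l]) ∧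
    UsesAtMost Q plt (ord.take i ++ ord[l] :: (ord.drop i).erase ord[l]) p :=
  fifo_priority_rule_general Q plt ord p hproc hp i l hl hfront hopen
end

section
/- Let Q be an instance of the FIFO stack-up problem and G_Q its sequence graph. If (u,v) is an arc of G_Q, then u ≠ v and in every processing of Q the pallet u is opened before the pallet v is closed; that is, the first bin labeled u is removed strictly before the last bin labeled v is removed. -/
/-
Since the bins are pairwise distinct, the bin `b'` labelled `v` that follows a bin `b`
labelled `u` in some sequence `q` can only be removed as the front of what remains of `q`;
at that moment every bin before it in `q`, in particular `b`, has already been removed.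
Hence the first `u`-bin is removed no later than `b`, strictly before `b'`, and `b'` no
later than the last `v`-bin.
-/

theorem List.Nodup.eq_of_mem_flatten {α : Type*} {L : List (List α)} (hL : L.flatten.Nodup)
    {l l' : List α} (hl : l ∈ L) (hl' : l' ∈ L) {a : α} (ha : a ∈ l) (ha' : a ∈ l') :
    l = l' := by
  have : Std.Symm (@List.Disjoint α) := ⟨fun _ _ => List.Disjoint.symm⟩
  by_contra hne
  exact (List.nodup_flatten.1 hL).2.forall hl hl' hne ha ha'

theorem List.Nodup.of_lt_of_head?_dropWhile {α : Type*} {p : α → Bool} {l : List α}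
    (hl : l.Nodup) {x y : α} (hx : (l.dropWhile p).head? = some x) {i j : ℕ} (hij : i < j)
    (hy : l[i]? = some y) (hxj : l[j]? = some x) : p y := by
  induction l generalizing i j with
  | nil => simp at hy
  | cons a l ih =>
    obtain ⟨ha, hl⟩ := List.nodup_cons.1 hl
    obtain _ | j := j
    · omega
    rw [List.getElem?_cons_succ] at hxj
    by_cases hpa : p a
    · rw [List.dropWhile_cons, if_pos hpa] at hx
      obtain _ | i := i
      · simpa [← Option.some_inj.1 hy] using hpa
      · exact ih hl hx (by omega) hy hxj
    · rw [List.dropWhile_cons, if_neg hpa, List.head?_cons, Option.some_inj] at hx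
      subst hx
      exact absurd (List.mem_of_getElem? hxj) ha

theorem IsProcessing.mem_take_of_lt {B : Type} [DecidableEq B] {Q : List (List B)}
    {ord : List B} (hord : IsProcessing Q ord) (hnd : Q.flatten.Nodup) {q : List B}
    (hq : q ∈ Q) {i j s : ℕ} (hij : i < j) {b : B} (hb : q[i]? = some b)
    (hs : s < ord.length) (hsj : q[j]? = some ord[s]) : b ∈ ord.take s := by
  obtain ⟨q', hq', hhead⟩ := hord.2 s hs
  obtain ⟨q₀, hq₀, rfl⟩ := List.mem_map.1 hq'
  have hq₀q : q₀ = q :=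
    hnd.eq_of_mem_flatten hq₀ hq
      ((List.dropWhile_sublist _).subset (List.mem_of_mem_head? hhead))
      (List.mem_of_getElem? hsj)
  subst hq₀q
  simpa using (List.nodup_flatten.1 hnd).1 q₀ hq |>.of_lt_of_head?_dropWhile hhead hij hb hsj

/-- If `(u,v)` is an arc of the sequence graph `G_Q`, then
`u ≠ v`, and in every processing of `Q` the pallet `u` is opened strictly
before the pallet `v` is closed: the first bin labeled `u` is removed strictly
before the last bin labeled `v` is removed. -/
theorem seqArc_opened_before_closed {B P : Type} [DecidableEq B]
    (Q : List (List B)) (plt : B → P) (hnd : Q.flatten.Nodup)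
    (u v : P) (harc : seqArc Q plt u v) :
    u ≠ v ∧
    ∀ ord : List B, IsProcessing Q ord →
      ∀ i j (hi : i < ord.length) (hj : j < ord.length),
        plt ord[i] = u →
        (∀ i' (hi' : i' < ord.length), plt ord[i'] = u → i ≤ i') →
        plt ord[j] = v →
        (∀ j' (hj' : j' < ord.length), plt ord[j'] = v → j' ≤ j) →
        i < j := by
  obtain ⟨hne, q, hq, k, l, hkl, ⟨b, hb, hbu⟩, ⟨b', hb', hb'v⟩⟩ := harc
  refine ⟨hne, fun ord hord i j _ _ _ hfirst _ hlast => ?_⟩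
  have hb'ord : b' ∈ ord :=
    hord.1.mem_iff.2 (List.mem_flatten.2 ⟨q, hq, List.mem_of_getElem? hb'⟩)
  obtain ⟨s, hs, rfl⟩ := List.getElem_of_mem hb'ord
  obtain ⟨t, ht, rfl⟩ := List.getElem_of_mem (hord.mem_take_of_lt hnd hq hkl hb hs hb')
  rw [List.getElem_take] at hbu
  rw [List.length_take] at ht
  have hit : i ≤ t := hfirst t (by omega) hbu
  have hsj : s ≤ j := hlast s hs hb'v
  omega
end

section
/- Let Q be an instance of the FIFO stack-up problem in which every pallet of plts(Q) has at least two bins in the sequences of Q. If (Q,Q_0), (Q,Q_1), …, (Q,Q_n) is a processing of Q with Q_0 = Q and Q_n consisting of empty sequences that uses at most p stack-up places, then the sequence of bags (open(Q,Q_0), open(Q,Q_1), …, open(Q,Q_n)) is a directed path-decomposition of the sequence graph G_Q of width at most p − 1. -/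
/-!
Since each step removes the front bin of a sequence, the bins of every sequence are removed in
their order (FIFO). Hence after the first `i` removals the remaining bins are exactly those of
rank `≥ i` in the removal order, and a pallet is open at step `i` iff it has a bin of rank `< i`
and one of rank `≥ i`. So each pallet is open on an interval of steps, nonempty because it has two
bins. For an arc `u → v` some bin of `u` precedes a bin of `v` in a sequence, so the first bin of
`u` is removed before the last bin of `v`, and suitable bags `i ≤ j` exist.
-/

namespace List

variable {α : Type*}

theorem eq_of_mem_of_mem_of_nodup_flatten {L : List (List α)} (hL : L.flatten.Nodup)
    {l₁ l₂ : List α} {a : α} (hl₁ : l₁ ∈ L) (hl₂ : l₂ ∈ L) (ha₁ : a ∈ l₁) (ha₂ : a ∈ l₂) :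
    l₁ = l₂ := by
  by_contra hne
  have : Std.Symm (α := List α) Disjoint := ⟨fun _ _ => Disjoint.symm⟩
  exact ((nodup_flatten.mp hL).2.forall hl₁ hl₂ hne) ha₁ ha₂

theorem Nodup.pred_of_pair_sublist_of_dropWhile_eq_cons {p : α → Bool} {a x : α} {r : List α} :
    ∀ {l : List α}, l.Nodup → l.dropWhile p = x :: r → [a, x] <+ l → p a
  | [], _, h, _ => by simp at h
  | y :: l, hl, h, hax => by
    rw [nodup_cons] at hl
    by_cases hy : p y
    · rw [dropWhile_cons_of_pos hy] at h
      rcases sublist_cons_iff.mp hax with hax | ⟨_, hr, -⟩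
      · exact hl.2.pred_of_pair_sublist_of_dropWhile_eq_cons h hax
      · exact (cons.inj hr).1 ▸ hy
    · rw [dropWhile_cons_of_neg hy, cons.injEq] at h
      obtain rfl := h.1
      rcases sublist_cons_iff.mp hax with hax | ⟨_, hr, hsub⟩
      · exact absurd (hax.subset (by simp)) hl.1
      · obtain ⟨-, rfl⟩ := cons.inj hr
        exact absurd (hsub.subset (mem_singleton_self _)) hl.1

theorem Pairwise.eq_false_of_mem_dropWhile {p : α → Bool} :
    ∀ {l : List α}, l.Pairwise (fun a b => p b → p a) → ∀ {x}, x ∈ l.dropWhile p → p x = false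
  | [], _, _, hx => by simp at hx
  | y :: l, hl, x, hx => by
    rw [pairwise_cons] at hl
    by_cases hy : p y
    · rw [dropWhile_cons_of_pos hy] at hx
      exact hl.2.eq_false_of_mem_dropWhile hx
    · rw [dropWhile_cons_of_neg hy, mem_cons] at hx
      rcases hx with rfl | hx
      · simpa using hy
      · simpa using mt (hl.1 x hx) hy

theorem mem_dropWhile_of_mem_of_eq_false {p : α → Bool} {l : List α} {x : α} (hx : x ∈ l)
    (hpx : p x = false) : x ∈ l.dropWhile p := by
  rw [← takeWhile_append_dropWhile (p := p) (l := l), mem_append] at hx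
  exact hx.resolve_left fun h => by simp [mem_takeWhile_imp h] at hpx

theorem Pairwise.rel_of_getElem?_eq_some {R : α → α → Prop} {l : List α} (hl : l.Pairwise R)
    {i j : ℕ} {a b : α} (ha : l[i]? = some a) (hb : l[j]? = some b) (hij : i < j) : R a b := by
  obtain ⟨hi, rfl⟩ := getElem?_eq_some_iff.mp ha
  obtain ⟨hj, rfl⟩ := getElem?_eq_some_iff.mp hb
  exact pairwise_iff_getElem.mp hl i j hi hj hij

end List

theorem isDPD_map_range {V : Type} {A : V → V → Prop} {Vs : Set V} {n : ℕ} {X : ℕ → Set V}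
    (hsub : ∀ i ≤ n, X i ⊆ Vs) (hcover : ∀ v ∈ Vs, ∃ i ≤ n, v ∈ X i)
    (harc : ∀ u v, A u v → ∃ i j, i ≤ j ∧ j ≤ n ∧ u ∈ X i ∧ v ∈ X j)
    (hconvex : ∀ v i j l, i ≤ l → l ≤ j → j ≤ n → v ∈ X i → v ∈ X j → v ∈ X l) :
    IsDPD A Vs ((List.range (n + 1)).map X) := by
  have hlen : ((List.range (n + 1)).map X).length = n + 1 := by simp
  refine ⟨?_, fun v hv => ?_, fun u v huv => ?_, fun v i j l hil hlj _ hj _ => ?_⟩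
  · simp only [List.mem_map, List.mem_range]
    rintro _ ⟨i, hi, rfl⟩
    exact hsub i (by omega)
  · obtain ⟨i, hi, hvi⟩ := hcover v hv
    exact ⟨i, by omega, by simpa using hvi⟩
  · obtain ⟨i, j, hij, hj, hui, hvj⟩ := harc u v huv
    exact ⟨i, j, hij, by omega, by omega, by simpa using hui, by simpa using hvj⟩
  · simp only [List.length_map, List.length_range, List.getElem_map, List.getElem_range] at hj ⊢
    exact hconvex v i j l hil hlj (by omega)

theorem openAfter_subset_pltsOf {B P : Type} [DecidableEq B] (Q : List (List B)) (plt : B → P)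
    (removed : List B) : openAfter Q plt removed ⊆ pltsOf Q plt := by
  rintro t ⟨-, _, hq', b, hb, rfl⟩
  obtain ⟨q, hq, rfl⟩ := List.mem_map.mp hq'
  exact ⟨q, hq, b, (List.dropWhile_sublist _).subset hb, rfl⟩

namespace IsProcessing

variable {B : Type} [DecidableEq B] {Q : List (List B)} {ord : List B}

theorem mem_iff_mem_flatten (hproc : IsProcessing Q ord) {b : B} : b ∈ ord ↔ b ∈ Q.flatten :=
  hproc.1.mem_iff

theorem mem_of_mem (hproc : IsProcessing Q ord) {q : List B} {b : B} (hq : q ∈ Q) (hb : b ∈ q) :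
    b ∈ ord :=
  hproc.mem_iff_mem_flatten.mpr (List.mem_flatten.mpr ⟨q, hq, hb⟩)

theorem pairwise_idxOf_lt (hnd : Q.flatten.Nodup) (hproc : IsProcessing Q ord) {q : List B}
    (hq : q ∈ Q) : q.Pairwise fun b b' => ord.idxOf b < ord.idxOf b' := by
  rw [List.pairwise_iff_forall_sublist]
  intro b b' hbb'
  have hmem : ∀ {x}, x ∈ [b, b'] → x ∈ ord := fun hx => hproc.mem_of_mem hq (hbb'.subset hx)
  have hs : ord.idxOf b' < ord.length := List.idxOf_lt_length_iff.mpr (hmem (by simp))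
  obtain ⟨_, hq₀, hhead⟩ := hproc.2 _ hs
  obtain ⟨q₀, hq₀Q, rfl⟩ := List.mem_map.mp hq₀
  rw [List.getElem_idxOf hs, List.head?_eq_some_iff] at hhead
  obtain ⟨tl, htl⟩ := hhead
  have hq₀q : q₀ = q := List.eq_of_mem_of_mem_of_nodup_flatten hnd hq₀Q hq
    ((List.dropWhile_sublist _).subset (htl ▸ List.mem_cons_self)) (hbb'.subset (by simp))
  rw [hq₀q] at htl
  have hqnd : q.Nodup := (List.nodup_flatten.mp hnd).1 q hq
  have hb : b ∈ ord.take (ord.idxOf b') := by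
    simpa using hqnd.pred_of_pair_sublist_of_dropWhile_eq_cons htl hbb'
  rwa [List.mem_take_iff_idxOf_lt (hmem List.mem_cons_self)] at hb

theorem mem_confAfter_take_iff (hnd : Q.flatten.Nodup) (hproc : IsProcessing Q ord) (i : ℕ)
    {b : B} : (∃ q ∈ confAfter Q (ord.take i), b ∈ q) ↔ b ∈ ord ∧ i ≤ ord.idxOf b := by
  constructor
  · rintro ⟨_, hq', hb⟩
    obtain ⟨q, hq, rfl⟩ := List.mem_map.mp hq'
    have hbo : b ∈ ord := hproc.mem_of_mem hq ((List.dropWhile_sublist _).subset hb)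
    have hdown : q.Pairwise fun a c => decide (c ∈ ord.take i) → decide (a ∈ ord.take i) :=
      (hproc.pairwise_idxOf_lt hnd hq).imp_of_mem fun {a c} ha hc hac => by
        simp only [decide_eq_true_eq, List.mem_take_iff_idxOf_lt (hproc.mem_of_mem hq ha),
          List.mem_take_iff_idxOf_lt (hproc.mem_of_mem hq hc)]
        omega
    have := hdown.eq_false_of_mem_dropWhile hb
    simp only [decide_eq_false_iff_not, List.mem_take_iff_idxOf_lt hbo] at this
    exact ⟨hbo, by omega⟩
  · rintro ⟨hbo, hi⟩
    obtain ⟨q, hq, hbq⟩ := List.mem_flatten.mp (hproc.mem_iff_mem_flatten.mp hbo)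
    refine ⟨_, List.mem_map.mpr ⟨q, hq, rfl⟩, List.mem_dropWhile_of_mem_of_eq_false hbq ?_⟩
    simp only [decide_eq_false_iff_not, List.mem_take_iff_idxOf_lt hbo]
    omega

variable {P : Type} {plt : B → P}

theorem mem_openAfter_take_iff (hnd : Q.flatten.Nodup) (hproc : IsProcessing Q ord) (i : ℕ)
    {t : P} : t ∈ openAfter Q plt (ord.take i) ↔
      (∃ b ∈ ord, ord.idxOf b < i ∧ plt b = t) ∧ (∃ b ∈ ord, i ≤ ord.idxOf b ∧ plt b = t) := by
  refine and_congr ⟨fun ⟨b, hb, hbt⟩ => ?_, fun ⟨b, hbo, hbi, hbt⟩ => ?_⟩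
    ⟨fun ⟨q, hq, b, hbq, hbt⟩ => ?_, fun ⟨b, hbo, hbi, hbt⟩ => ?_⟩
  · have hbo := List.mem_of_mem_take hb
    exact ⟨b, hbo, (List.mem_take_iff_idxOf_lt hbo).mp hb, hbt⟩
  · exact ⟨b, (List.mem_take_iff_idxOf_lt hbo).mpr hbi, hbt⟩
  · obtain ⟨hbo, hbi⟩ := (hproc.mem_confAfter_take_iff hnd i).mp ⟨q, hq, hbq⟩
    exact ⟨b, hbo, hbi, hbt⟩
  · obtain ⟨q, hq, hbq⟩ := (hproc.mem_confAfter_take_iff hnd i).mpr ⟨hbo, hbi⟩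
    exact ⟨q, hq, b, hbq, hbt⟩

theorem exists_idxOf_ne (hproc : IsProcessing Q ord) (htwo : EveryPalletTwoBins Q plt) {b : B}
    (hb : b ∈ ord) : ∃ b' ∈ ord, plt b' = plt b ∧ ord.idxOf b' ≠ ord.idxOf b := by
  obtain ⟨q, hq, hbq⟩ := List.mem_flatten.mp (hproc.mem_iff_mem_flatten.mp hb)
  obtain ⟨b₁, b₂, hne, h₁, h₂, ht₁, ht₂⟩ := htwo (plt b) ⟨q, hq, b, hbq, rfl⟩
  obtain ⟨b', hb', hb't, hb'b⟩ : ∃ b' ∈ Q.flatten, plt b' = plt b ∧ b' ≠ b := by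
    by_cases h : b₁ = b
    · exact ⟨b₂, h₂, ht₂, fun h' => hne (h.trans h'.symm)⟩
    · exact ⟨b₁, h₁, ht₁, h⟩
  have hb'o := hproc.mem_iff_mem_flatten.mpr hb'
  exact ⟨b', hb'o, hb't, mt (List.idxOf_inj hb'o).mp hb'b⟩

theorem exists_interval_mem_openAfter_take (hnd : Q.flatten.Nodup) (hproc : IsProcessing Q ord)
    (htwo : EveryPalletTwoBins Q plt) {b : B} (hb : b ∈ ord) :
    ∃ m M, m < M ∧ m ≤ ord.idxOf b ∧ ord.idxOf b ≤ M ∧ M < ord.length ∧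
      ∀ i, m < i → i ≤ M → plt b ∈ openAfter Q plt (ord.take i) := by
  obtain ⟨b', hb', hb't, hne⟩ := hproc.exists_idxOf_ne htwo hb
  have hlen : ∀ {x}, x ∈ ord → ord.idxOf x < ord.length := List.idxOf_lt_length_iff.mpr
  rcases hne.lt_or_gt with h | h
  · exact ⟨_, _, h, h.le, le_rfl, hlen hb, fun i hi hi' =>
      (hproc.mem_openAfter_take_iff hnd i).mpr ⟨⟨b', hb', hi, hb't⟩, ⟨b, hb, hi', rfl⟩⟩⟩
  · exact ⟨_, _, h, le_rfl, h.le, hlen hb', fun i hi hi' =>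
      (hproc.mem_openAfter_take_iff hnd i).mpr ⟨⟨b, hb, hi, rfl⟩, ⟨b', hb', hi', hb't⟩⟩⟩

theorem exists_mem_openAfter_take (hnd : Q.flatten.Nodup) (hproc : IsProcessing Q ord)
    (htwo : EveryPalletTwoBins Q plt) {t : P} (ht : t ∈ pltsOf Q plt) :
    ∃ i ≤ ord.length, t ∈ openAfter Q plt (ord.take i) := by
  obtain ⟨q, hq, b, hbq, rfl⟩ := ht
  obtain ⟨m, M, hmM, -, -, hM, hopen⟩ :=
    hproc.exists_interval_mem_openAfter_take hnd htwo (hproc.mem_of_mem hq hbq)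
  exact ⟨m + 1, by omega, hopen _ (by omega) (by omega)⟩

theorem exists_le_of_seqArc (hnd : Q.flatten.Nodup) (hproc : IsProcessing Q ord)
    (htwo : EveryPalletTwoBins Q plt) {u v : P} (huv : seqArc Q plt u v) :
    ∃ i j, i ≤ j ∧ j ≤ ord.length ∧
      u ∈ openAfter Q plt (ord.take i) ∧ v ∈ openAfter Q plt (ord.take j) := by
  obtain ⟨-, q, hq, i, j, hij, ⟨b, hb, rfl⟩, ⟨b', hb', rfl⟩⟩ := huv
  have hbb' := (hproc.pairwise_idxOf_lt hnd hq).rel_of_getElem?_eq_some hb hb' hij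
  have hmem : ∀ {x} {k : ℕ}, q[k]? = some x → x ∈ ord := fun h =>
    hproc.mem_of_mem hq (List.mem_of_getElem? h)
  obtain ⟨mu, Mu, hmMu, hmu, -, -, hu⟩ :=
    hproc.exists_interval_mem_openAfter_take hnd htwo (hmem hb)
  obtain ⟨mv, Mv, hmMv, -, hMv, hMv', hv⟩ :=
    hproc.exists_interval_mem_openAfter_take hnd htwo (hmem hb')
  exact ⟨mu + 1, max (mu + 1) (mv + 1), le_max_left _ _, by omega, hu _ (by omega) (by omega),
    hv _ (by omega) (by omega)⟩

theorem mem_openAfter_take_of_le_of_le (hnd : Q.flatten.Nodup) (hproc : IsProcessing Q ord)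
    {t : P} {i j l : ℕ} (hil : i ≤ l) (hlj : l ≤ j) (hi : t ∈ openAfter Q plt (ord.take i))
    (hj : t ∈ openAfter Q plt (ord.take j)) : t ∈ openAfter Q plt (ord.take l) := by
  rw [hproc.mem_openAfter_take_iff hnd] at hi hj ⊢
  obtain ⟨⟨b, hb, hbi, hbt⟩, -⟩ := hi
  obtain ⟨-, ⟨b', hb', hb'j, hb't⟩⟩ := hj
  exact ⟨⟨b, hb, by omega, hbt⟩, ⟨b', hb', by omega, hb't⟩⟩

end IsProcessing

/-- If every pallet of `Q` has at least two bins and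
`ord` is a processing of `Q` that uses at most `p` stack-up places, then the
sequence of bags `(open(Q,Q_0), open(Q,Q_1), …, open(Q,Q_n))` is a directed
path-decomposition of the sequence graph `G_Q` of width at most `p - 1`
(i.e. every bag has at most `p` elements). -/
theorem processing_gives_dpd {B P : Type} [DecidableEq B]
    (Q : List (List B)) (plt : B → P) (hnd : Q.flatten.Nodup)
    (htwo : EveryPalletTwoBins Q plt)
    (ord : List B) (p : ℕ)
    (hproc : IsProcessing Q ord) (hp : UsesAtMost Q plt ord p) :
    IsDPD (seqArc Q plt) (pltsOf Q plt)
      ((List.range (ord.length + 1)).map fun i => openAfter Q plt (ord.take i)) ∧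
    ∀ C ∈ (List.range (ord.length + 1)).map fun i => openAfter Q plt (ord.take i),
      C.ncard ≤ p := by
  refine ⟨isDPD_map_range (fun i _ => openAfter_subset_pltsOf Q plt _)
    (fun _ ht => hproc.exists_mem_openAfter_take hnd htwo ht)
    (fun _ _ huv => hproc.exists_le_of_seqArc hnd htwo huv)
    (fun _ _ _ _ hil hlj _ hi hj => hproc.mem_openAfter_take_of_le_of_le hnd hil hlj hi hj), ?_⟩
  simp only [List.mem_map, List.mem_range]
  rintro _ ⟨i, hi, rfl⟩
  exact hp i (by omega)
end

section
/- Let Q = (q_1, …, q_k) be an instance of the FIFO stack-up problem in which every pallet of plts(Q) has at least two bins in the sequences of Q. Let (i_1, …, i_k) with 0 ≤ i_j < |q_j| for the chosen index j describe a configuration, and let t be the pallet label of the bin at position i_j + 1 of sequence q_j. Then #cut_Q(i_1, …, i_{j-1}, i_j + 1, i_{j+1}, …, i_k) = #cut_Q(i_1, …, i_k) + c_j, where c_j = 1 if first(q_j, t) = i_j + 1 and for every ℓ ≠ j either t ∉ plts(q_ℓ) or first(q_ℓ, t) > i_ℓ; c_j = −1 if last(q_j, t) = i_j + 1 and for every ℓ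 ≠ j either t ∉ plts(q_ℓ) or last(q_ℓ, t) ≤ i_ℓ; and c_j = 0 otherwise. -/
/-- `first(q,t)`: the (1-based) position of the first bin of `q` labeled `t`;
it is `|q| + 1` if no bin of `q` is labeled `t`. -/
def firstPos {B P : Type} [DecidableEq P] (plt : B → P) (q : List B) (t : P) : ℕ :=
  q.findIdx (fun b => decide (plt b = t)) + 1

/-- `last(q,t)`: the (1-based) position of the last bin of `q` labeled `t`;
it is `0` if no bin of `q` is labeled `t`. -/
def lastPos {B P : Type} [DecidableEq P] (plt : B → P) (q : List B) (t : P) : ℕ :=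
  q.length - q.reverse.findIdx (fun b => decide (plt b = t))

/-- The cut `cut_Q(i_1, …, i_k)` at the configuration described by `c`: the
set of pallets having a bin among the first `c j` bins of some sequence `q_j`
(already removed) and also a bin among the remaining bins of some sequence. -/
def cutQ {B P : Type} (Q : List (List B)) (plt : B → P)
    (c : Fin Q.length → ℕ) : Set P :=
  {t | (∃ j : Fin Q.length, ∃ b ∈ (Q.get j).take (c j), plt b = t) ∧
       (∃ j : Fin Q.length, ∃ b ∈ (Q.get j).drop (c j), plt b = t)}

/-!
Write the cut as `L ∩ R`, where `L` collects the pallets with a removed bin and `R` those with a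
remaining bin. Removing the bin `b` of pallet `t` turns `L` into `insert t L` and `R` into a set
`R'` with `R = insert t R'`, so the cut grows by one exactly when `t ∉ L` and `t ∈ R'`, shrinks by
one exactly when `t ∈ L` and `t ∉ R'`, and is unchanged otherwise. In terms of positions, `t ∉ L`
is the condition on `first` and `t ∉ R'` the condition on `last`; and since `t` has a second bin,
which is still waiting when `t ∉ L`, the condition on `first` already forces `t ∈ R'`.
-/

theorem exists_iff_or_exists_ne {ι : Sort*} (i : ι) (p : ι → Prop) :
    (∃ l, p l) ↔ p i ∨ ∃ l ≠ i, p l := by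
  refine ⟨fun ⟨l, hl⟩ => ?_, fun h => h.elim (⟨i, ·⟩) fun ⟨l, _, hl⟩ => ⟨l, hl⟩⟩
  rcases eq_or_ne l i with rfl | hli
  exacts [Or.inl hl, Or.inr ⟨l, hli, hl⟩]

open Classical in
theorem Set.ncard_insert_inter_eq {α : Type*} {A R : Set α} (t : α) (h : (A ∩ R).Finite) :
    ((insert t A ∩ R).ncard : ℤ) = (A ∩ insert t R).ncard +
      (if t ∉ A ∧ t ∈ R then 1 else if t ∈ A ∧ t ∉ R then -1 else 0) := by
  by_cases hA : t ∈ A <;> by_cases hR : t ∈ R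
  · simp [Set.insert_eq_of_mem hA, Set.insert_eq_of_mem hR, hA, hR]
  · have htAR : t ∉ A ∩ R := fun h => hR h.2
    simp [Set.inter_insert_of_mem hA, Set.ncard_insert_of_notMem htAR h, hA, hR]
  · have htAR : t ∉ A ∩ R := fun h => hA h.1
    simp [Set.insert_inter_of_mem hR, Set.ncard_insert_of_notMem htAR h, hA, hR]
  · simp [Set.insert_inter_of_notMem hR, Set.inter_insert_of_notMem hA, hA, hR]

namespace List

variable {α β : Type*} (f : α → β) {l : List α} {n : ℕ} {a : α}

theorem exists_mem_take_add_one_iff (ha : l[n]? = some a) (s : β) :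
    (∃ x ∈ l.take (n + 1), f x = s) ↔ (∃ x ∈ l.take n, f x = s) ∨ f a = s := by
  rw [take_add_one, ha]
  simp only [Option.toList_some, mem_append, mem_singleton, or_and_right, exists_or,
    exists_eq_left]

theorem drop_eq_cons_of_getElem? (ha : l[n]? = some a) : l.drop n = a :: l.drop (n + 1) := by
  obtain ⟨hn, rfl⟩ := getElem?_eq_some_iff.mp ha
  exact drop_eq_getElem_cons hn

theorem exists_mem_drop_iff_of_getElem? (ha : l[n]? = some a) (s : β) :
    (∃ x ∈ l.drop n, f x = s) ↔ f a = s ∨ ∃ x ∈ l.drop (n + 1), f x = s := by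
  rw [drop_eq_cons_of_getElem? ha]
  simp only [mem_cons, or_and_right, exists_or, exists_eq_left]

end List

section FirstLast

variable {B P : Type} [DecidableEq P] (plt : B → P)

theorem exists_mem_iff_findIdx_lt_length (q : List B) (t : P) :
    (∃ x ∈ q, plt x = t) ↔ q.findIdx (fun b => decide (plt b = t)) < q.length := by
  simp

theorem exists_mem_take_iff_firstPos_le (q : List B) (t : P) (m : ℕ) :
    (∃ x ∈ q.take m, plt x = t) ↔ firstPos plt q t ≤ m ∧ ∃ x ∈ q, plt x = t := by
  simp only [exists_mem_iff_findIdx_lt_length, List.findIdx_take, List.length_take, firstPos]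
  omega

theorem exists_mem_drop_iff_lt_lastPos (q : List B) (t : P) (m : ℕ) :
    (∃ x ∈ q.drop m, plt x = t) ↔ m < lastPos plt q t := by
  have hrev : (∃ x ∈ q.drop m, plt x = t) ↔ ∃ x ∈ q.reverse.take (q.length - m), plt x = t := by
    simp only [← List.reverse_drop, List.mem_reverse]
  rw [hrev, exists_mem_take_iff_firstPos_le, exists_mem_iff_findIdx_lt_length, firstPos, lastPos,
    List.length_reverse]
  omega

end FirstLast

theorem mem_pltsOf_singleton_iff {B P : Type} (plt : B → P) (q : List B) (t : P) :
    t ∈ pltsOf [q] plt ↔ ∃ x ∈ q, plt x = t := by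
  simp [pltsOf]

section Cut

variable {B P : Type} (Q : List (List B)) (plt : B → P)

def leftPlts (c : Fin Q.length → ℕ) : Set P :=
  {t | ∃ l : Fin Q.length, ∃ b ∈ (Q.get l).take (c l), plt b = t}

def rightPlts (c : Fin Q.length → ℕ) : Set P :=
  {t | ∃ l : Fin Q.length, ∃ b ∈ (Q.get l).drop (c l), plt b = t}

theorem cutQ_eq_inter (c : Fin Q.length → ℕ) :
    cutQ Q plt c = leftPlts Q plt c ∩ rightPlts Q plt c := rfl

theorem leftPlts_finite (c : Fin Q.length → ℕ) : (leftPlts Q plt c).Finite := by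
  refine (Q.flatten.finite_toSet.image plt).subset ?_
  rintro s ⟨l, x, hx, rfl⟩
  exact ⟨x, List.mem_flatten.mpr ⟨Q.get l, List.get_mem Q l, List.mem_of_mem_take hx⟩, rfl⟩

variable {Q} {c : Fin Q.length → ℕ} {j : Fin Q.length} {b : B}

theorem leftPlts_update_succ (hb : (Q.get j)[c j]? = some b) :
    leftPlts Q plt (Function.update c j (c j + 1)) = insert (plt b) (leftPlts Q plt c) := by
  ext s
  simp only [leftPlts, Set.mem_ofPred_eq, Set.mem_insert_iff,
    Function.exists_update_iff c (fun l n => ∃ x ∈ (Q.get l).take n, plt x = s),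
    exists_iff_or_exists_ne j (fun l => ∃ x ∈ (Q.get l).take (c l), plt x = s),
    List.exists_mem_take_add_one_iff plt hb]
  rw [@eq_comm _ s]
  simp only [or_assoc, or_left_comm]

theorem rightPlts_eq_insert_update_succ (hb : (Q.get j)[c j]? = some b) :
    rightPlts Q plt c = insert (plt b) (rightPlts Q plt (Function.update c j (c j + 1))) := by
  ext s
  simp only [rightPlts, Set.mem_ofPred_eq, Set.mem_insert_iff,
    Function.exists_update_iff c (fun l n => ∃ x ∈ (Q.get l).drop n, plt x = s),
    exists_iff_or_exists_ne j (fun l => ∃ x ∈ (Q.get l).drop (c l), plt x = s),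
    List.exists_mem_drop_iff_of_getElem? plt hb]
  rw [@eq_comm _ s]
  simp only [or_assoc]

theorem mem_rightPlts_update_of_notMem_leftPlts (htwo : EveryPalletTwoBins Q plt)
    (hb : (Q.get j)[c j]? = some b) (hleft : plt b ∉ leftPlts Q plt c) :
    plt b ∈ rightPlts Q plt (Function.update c j (c j + 1)) := by
  obtain ⟨b₁, b₂, hne, hb₁, hb₂, hp₁, hp₂⟩ :=
    htwo (plt b) ⟨Q.get j, List.get_mem Q j, b, List.mem_of_getElem? hb, rfl⟩
  obtain ⟨b', hb'b, hb'Q, hb't⟩ : ∃ b', b' ≠ b ∧ b' ∈ Q.flatten ∧ plt b' = plt b := by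
    by_cases h : b₁ = b
    exacts [⟨b₂, h ▸ hne.symm, hb₂, hp₂⟩, ⟨b₁, h, hb₁, hp₁⟩]
  obtain ⟨l, hl⟩ : ∃ l : Fin Q.length, b' ∈ Q.get l := by
    obtain ⟨q, hq, hb'q⟩ := List.mem_flatten.mp hb'Q
    obtain ⟨l, rfl⟩ := List.mem_iff_get.mp hq
    exact ⟨l, hb'q⟩
  have hdrop : b' ∈ (Q.get l).drop (c l) := by
    rw [← List.take_append_drop (c l) (Q.get l), List.mem_append] at hl
    exact hl.resolve_left fun h => hleft ⟨l, b', h, hb't⟩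
  refine ⟨l, b', ?_, hb't⟩
  rcases eq_or_ne l j with rfl | hlj
  · rw [List.drop_eq_cons_of_getElem? hb, List.mem_cons] at hdrop
    rw [Function.update_self]
    exact hdrop.resolve_left hb'b
  · rwa [Function.update_of_ne hlj]

variable [DecidableEq P]

theorem notMem_leftPlts_iff (hb : (Q.get j)[c j]? = some b) :
    plt b ∉ leftPlts Q plt c ↔ firstPos plt (Q.get j) (plt b) = c j + 1 ∧
      ∀ l, l ≠ j → (plt b ∉ pltsOf [Q.get l] plt ∨ c l < firstPos plt (Q.get l) (plt b)) := by
  have hj := (exists_mem_take_iff_firstPos_le plt _ _ _).mp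
    ((List.exists_mem_take_add_one_iff plt hb _).mpr (Or.inr rfl))
  simp only [leftPlts, Set.mem_ofPred_eq]
  rw [exists_iff_or_exists_ne j (fun l => ∃ x ∈ (Q.get l).take (c l), plt x = plt b)]
  simp only [exists_mem_take_iff_firstPos_le, mem_pltsOf_singleton_iff, not_or, hj.2, and_true]
  refine and_congr (by omega) (not_exists.trans (forall_congr' fun l => not_and.trans ?_))
  refine imp_congr_right fun _ => ?_
  rw [not_and_or, not_le, or_comm]

theorem notMem_rightPlts_update_iff (hb : (Q.get j)[c j]? = some b) :
    plt b ∉ rightPlts Q plt (Function.update c j (c j + 1)) ↔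
      lastPos plt (Q.get j) (plt b) = c j + 1 ∧
      ∀ l, l ≠ j → (plt b ∉ pltsOf [Q.get l] plt ∨ lastPos plt (Q.get l) (plt b) ≤ c l) := by
  have hj := (exists_mem_drop_iff_lt_lastPos plt _ _ _).mp
    ((List.exists_mem_drop_iff_of_getElem? plt hb _).mpr (Or.inl rfl))
  have hpos (l : Fin Q.length) :
      (∃ x ∈ Q.get l, plt x = plt b) ↔ 0 < lastPos plt (Q.get l) (plt b) := by
    simpa using exists_mem_drop_iff_lt_lastPos plt (Q.get l) (plt b) 0
  simp only [rightPlts, Set.mem_ofPred_eq]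
  rw [Function.exists_update_iff c (fun l n => ∃ x ∈ (Q.get l).drop n, plt x = plt b)]
  simp only [exists_mem_drop_iff_lt_lastPos, mem_pltsOf_singleton_iff, not_or, hpos]
  exact and_congr (by omega)
    (not_exists.trans (forall_congr' fun l => not_and.trans (imp_congr_right fun _ => by omega)))

end Cut

open Classical in
theorem cut_update_general {B P : Type} [DecidableEq P]
    (Q : List (List B)) (plt : B → P)
    (htwo : EveryPalletTwoBins Q plt)
    (c : Fin Q.length → ℕ)
    (j : Fin Q.length)
    (t : P) (ht : ∃ b, (Q.get j)[c j]? = some b ∧ plt b = t) :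
    ((cutQ Q plt (Function.update c j (c j + 1))).ncard : ℤ) =
      (cutQ Q plt c).ncard +
        (if firstPos plt (Q.get j) t = c j + 1 ∧
            (∀ l, l ≠ j → (t ∉ pltsOf [Q.get l] plt ∨ c l < firstPos plt (Q.get l) t))
         then 1
         else if lastPos plt (Q.get j) t = c j + 1 ∧
            (∀ l, l ≠ j → (t ∉ pltsOf [Q.get l] plt ∨ lastPos plt (Q.get l) t ≤ c l))
         then -1
         else 0) := by
  obtain ⟨b, hb, rfl⟩ := ht
  rw [cutQ_eq_inter, cutQ_eq_inter, leftPlts_update_succ plt hb,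
    rightPlts_eq_insert_update_succ plt hb,
    Set.ncard_insert_inter_eq _ ((leftPlts_finite Q plt c).inter_of_left _)]
  have hopen := mem_rightPlts_update_of_notMem_leftPlts plt htwo hb
  have hfirst := notMem_leftPlts_iff plt hb
  have hlast := notMem_rightPlts_update_iff plt hb
  congr 1
  split_ifs <;> tauto

open Classical in
/-- Removing the next bin (the bin at position `i_j + 1`)
from sequence `q_j` changes the size of the cut by `c_j`, where `c_j = 1` if
the pallet `t` of this bin is opened by this step, `c_j = -1` if `t` is closed
by this step, and `c_j = 0` otherwise. -/
theorem cut_update {B P : Type} [DecidableEq B] [DecidableEq P]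
    (Q : List (List B)) (plt : B → P)
    (hnd : Q.flatten.Nodup) (htwo : EveryPalletTwoBins Q plt)
    (c : Fin Q.length → ℕ) (hc : ∀ l, c l ≤ (Q.get l).length)
    (j : Fin Q.length) (hj : c j < (Q.get j).length)
    (t : P) (ht : ∃ b, (Q.get j)[c j]? = some b ∧ plt b = t) :
    ((cutQ Q plt (Function.update c j (c j + 1))).ncard : ℤ) =
      (cutQ Q plt c).ncard +
        (if firstPos plt (Q.get j) t = c j + 1 ∧
            (∀ l, l ≠ j → (t ∉ pltsOf [Q.get l] plt ∨ c l < firstPos plt (Q.get l) t))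
         then 1
         else if lastPos plt (Q.get j) t = c j + 1 ∧
            (∀ l, l ≠ j → (t ∉ pltsOf [Q.get l] plt ∨ lastPos plt (Q.get l) t ≤ c l))
         then -1
         else 0) :=
  cut_update_general Q plt htwo c j t ht
end

section
/- Let Q = (q_1, …, q_k) be an instance of the FIFO stack-up problem and p ≥ 0. There is a processing of Q such that at most p pallets are open in every configuration if and only if in the processing graph of Q there is a directed path from the vertex (0, …, 0) to the vertex (|q_1|, …, |q_k|) such that every vertex v = (i_1, …, i_k) on this path satisfies #cut_Q(i_1, …, i_k) ≤ p. -/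
/-- The arc relation of the processing graph of `Q`: there is an arc from a
configuration `c` to a configuration `c'` iff `c'` is obtained from `c` by
increasing exactly one coordinate by one. -/
def ProcStep {B : Type} (Q : List (List B)) (c c' : Fin Q.length → ℕ) : Prop :=
  ∃ j, c' j = c j + 1 ∧ ∀ l, l ≠ j → c' l = c l


/-!
A set of removed bins reached by a processing is always a union of prefixes of the sequences,
so it is described by the vertex `c` of the processing graph recording the prefix lengths: the
remaining sequences are the suffixes `drop (c j)`, and the open pallets are exactly `cut_Q(c)`.
Removing the front bin of `q_j` moves `c` along the arc increasing coordinate `j`, so processings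
and paths from `(0, …, 0)` to `(|q_1|, …, |q_k|)` correspond step by step, with the same sets of
open pallets along the way.
-/

theorem List.dropWhile_eq_drop_of_forall_take {α : Type*} {p : α → Bool} {l : List α} {n : ℕ}
    (hpos : ∀ a ∈ l.take n, p a) (hneg : ∀ h : n < l.length, ¬p l[n]) :
    l.dropWhile p = l.drop n := by
  conv_lhs => rw [← List.take_append_drop n l]
  rw [List.dropWhile_append_of_pos hpos]
  by_cases hn : n < l.length
  · rw [List.drop_eq_getElem_cons hn, List.dropWhile_cons_of_neg (hneg hn)]
  · rw [List.drop_eq_nil_of_le (by omega), List.dropWhile_nil]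

namespace FifoStackUp

variable {B P : Type} {Q : List (List B)}

theorem eq_of_mem_get_of_mem_get (hnd : Q.flatten.Nodup) {b : B} {j j' : Fin Q.length}
    (h : b ∈ Q.get j) (h' : b ∈ Q.get j') : j = j' := by
  have hdisj := List.pairwise_iff_get.mp (List.nodup_flatten.mp hnd).2
  by_contra hne
  rcases lt_or_gt_of_ne hne with hlt | hlt
  · exact hdisj j j' hlt h h'
  · exact hdisj j' j hlt h' h

/-- `r` lists, without repetition, the bins removed on reaching the vertex `c` of the processing
graph, namely the first `c j` bins of each sequence `q_j`. -/
structure RemovedAt (Q : List (List B)) (r : List B) (c : Fin Q.length → ℕ) : Prop where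
  nodup : r.Nodup
  le_length : ∀ j, c j ≤ (Q.get j).length
  mem_iff : ∀ b, b ∈ r ↔ ∃ j, b ∈ (Q.get j).take (c j)

namespace RemovedAt

variable {r : List B} {c : Fin Q.length → ℕ}

theorem nil : RemovedAt Q [] (fun _ => 0) :=
  ⟨List.nodup_nil, fun _ => Nat.zero_le _, by simp⟩

theorem getElem_notMem (hnd : Q.flatten.Nodup) (h : RemovedAt Q r c) {j : Fin Q.length}
    (hj : c j < (Q.get j).length) : (Q.get j)[c j] ∉ r := by
  intro hmem
  obtain ⟨j', hj'⟩ := (h.mem_iff _).mp hmem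
  obtain rfl : j' = j :=
    eq_of_mem_get_of_mem_get hnd (List.mem_of_mem_take hj') (List.getElem_mem hj)
  obtain ⟨i, hi, hget⟩ := List.mem_take_iff_getElem.mp hj'
  have hnodup : (Q.get j').Nodup := (List.nodup_flatten.mp hnd).1 _ (List.get_mem Q j')
  have : i = c j' := (hnodup.getElem_inj_iff).mp hget
  omega

theorem concat (hnd : Q.flatten.Nodup) (h : RemovedAt Q r c) {j : Fin Q.length}
    (hj : c j < (Q.get j).length) :
    RemovedAt Q (r ++ [(Q.get j)[c j]]) (Function.update c j (c j + 1)) := by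
  have htake : ∀ l, (Q.get l).take (Function.update c j (c j + 1) l) =
      (Q.get l).take (c l) ++ if l = j then [(Q.get j)[c j]] else [] := by
    intro l
    by_cases hl : l = j
    · subst hl
      simp [List.take_add_one]
    · simp [hl]
  refine ⟨?_, fun l => ?_, fun b => ?_⟩
  · exact h.nodup.append (List.nodup_singleton _)
      (List.disjoint_singleton.mpr (h.getElem_notMem hnd hj))
  · rcases eq_or_ne l j with rfl | hl
    · simpa using hj
    · simpa [Function.update_of_ne hl] using h.le_length l
  · simp only [htake, List.mem_append, h.mem_iff, List.mem_singleton]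
    constructor
    · rintro (⟨l, hl⟩ | rfl)
      · exact ⟨l, Or.inl hl⟩
      · exact ⟨j, Or.inr (by simp)⟩
    · rintro ⟨l, hl | hl⟩
      · exact Or.inl ⟨l, hl⟩
      · split_ifs at hl with hlj
        · exact Or.inr (List.mem_singleton.mp hl)
        · simp at hl

theorem eq_length_iff_perm (hnd : Q.flatten.Nodup) (h : RemovedAt Q r c) :
    c = (fun j => (Q.get j).length) ↔ r.Perm Q.flatten := by
  constructor
  · rintro rfl
    refine (List.perm_ext_iff_of_nodup h.nodup hnd).mpr fun b => ?_
    simp only [h.mem_iff, List.take_length, List.mem_flatten]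
    constructor
    · rintro ⟨j, hb⟩
      exact ⟨_, List.get_mem Q j, hb⟩
    · rintro ⟨q, hq, hb⟩
      obtain ⟨j, rfl⟩ := List.mem_iff_get.mp hq
      exact ⟨j, hb⟩
  · intro hperm
    funext j
    refine (h.le_length j).antisymm (not_lt.mp fun hj => h.getElem_notMem hnd hj ?_)
    exact hperm.mem_iff.mpr (List.mem_flatten.mpr ⟨_, List.get_mem Q j, List.getElem_mem hj⟩)

variable [DecidableEq B]

theorem mem_confAfter (hnd : Q.flatten.Nodup) (h : RemovedAt Q r c) {q : List B} :
    q ∈ confAfter Q r ↔ ∃ j, (Q.get j).drop (c j) = q := by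
  have hdrop : ∀ j, (Q.get j).dropWhile (fun b => decide (b ∈ r)) = (Q.get j).drop (c j) :=
    fun j => List.dropWhile_eq_drop_of_forall_take
      (fun b hb => decide_eq_true ((h.mem_iff b).mpr ⟨j, hb⟩))
      (fun hj => by simpa using h.getElem_notMem hnd hj)
  simp only [confAfter, List.mem_map]
  constructor
  · rintro ⟨_, hq, rfl⟩
    obtain ⟨j, rfl⟩ := List.mem_iff_get.mp hq
    exact ⟨j, (hdrop j).symm⟩
  · rintro ⟨j, rfl⟩
    exact ⟨_, List.get_mem Q j, hdrop j⟩

theorem exists_head_confAfter_iff (hnd : Q.flatten.Nodup) (h : RemovedAt Q r c) {b : B} :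
    (∃ q ∈ confAfter Q r, q.head? = some b) ↔
      ∃ j, ∃ hj : c j < (Q.get j).length, (Q.get j)[c j] = b := by
  simp only [h.mem_confAfter hnd]
  constructor
  · rintro ⟨_, ⟨j, rfl⟩, hb⟩
    exact ⟨j, List.getElem?_eq_some_iff.mp (List.head?_drop ▸ hb)⟩
  · rintro ⟨j, hj, rfl⟩
    exact ⟨_, ⟨j, rfl⟩, by rw [List.head?_drop, List.getElem?_eq_getElem hj]⟩

theorem openAfter_eq_cutQ (hnd : Q.flatten.Nodup) (h : RemovedAt Q r c) (plt : B → P) :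
    openAfter Q plt r = cutQ Q plt c := by
  ext t
  simp only [openAfter, cutQ, Set.mem_ofPred_eq, h.mem_confAfter hnd]
  constructor
  · rintro ⟨⟨b, hb, hbt⟩, _, ⟨j', rfl⟩, b', hb', hbt'⟩
    obtain ⟨j, hj⟩ := (h.mem_iff b).mp hb
    exact ⟨⟨j, b, hj, hbt⟩, ⟨j', b', hb', hbt'⟩⟩
  · rintro ⟨⟨j, b, hb, hbt⟩, j', b', hb', hbt'⟩
    exact ⟨⟨b, (h.mem_iff b).mpr ⟨j, hb⟩, hbt⟩, _, ⟨j', rfl⟩, b', hb', hbt'⟩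

end RemovedAt

theorem procStep_iff {c c' : Fin Q.length → ℕ} :
    ProcStep Q c c' ↔ ∃ j, c' = Function.update c j (c j + 1) := by
  constructor
  · rintro ⟨j, hj, hother⟩
    refine ⟨j, funext fun l => ?_⟩
    rcases eq_or_ne l j with rfl | hl
    · simpa using hj
    · simpa [Function.update_of_ne hl] using hother l hl
  · rintro ⟨j, rfl⟩
    exact ⟨j, by simp, fun l hl => Function.update_of_ne hl _ _⟩

/-- The vertices of the path `L` are exactly the vertices passed by the removal order `ord`. -/
def Tracks (Q : List (List B)) (ord : List B) (L : List (Fin Q.length → ℕ)) : Prop :=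
  (∀ c ∈ L, ∃ r, r <+: ord ∧ RemovedAt Q r c) ∧ ∀ r, r <+: ord → ∃ c ∈ L, RemovedAt Q r c

namespace Tracks

theorem nil : Tracks Q [] [fun _ => 0] := by
  refine ⟨fun c hc => ⟨[], List.nil_prefix, ?_⟩, fun r hr => ⟨_, List.mem_singleton_self _, ?_⟩⟩
  · rw [List.mem_singleton.mp hc]
    exact RemovedAt.nil
  · rw [List.prefix_nil.mp hr]
    exact RemovedAt.nil

theorem concat {ord : List B} {L : List (Fin Q.length → ℕ)} (h : Tracks Q ord L) {b : B}
    {c : Fin Q.length → ℕ} (hc : RemovedAt Q (ord ++ [b]) c) :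
    Tracks Q (ord ++ [b]) (L ++ [c]) := by
  refine ⟨fun c' hc' => ?_, fun r hr => ?_⟩
  · rcases List.mem_append.mp hc' with hc' | hc'
    · obtain ⟨r, hr, hrc⟩ := h.1 c' hc'
      exact ⟨r, hr.trans (List.prefix_append _ _), hrc⟩
    · rw [List.mem_singleton.mp hc']
      exact ⟨_, List.prefix_rfl, hc⟩
  · rcases List.prefix_concat_iff.mp hr with rfl | hr
    · exact ⟨c, by simp, hc⟩
    · obtain ⟨c', hc', hrc⟩ := h.2 r hr
      exact ⟨c', List.mem_append_left _ hc', hrc⟩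

theorem le_length {ord : List B} {L : List (Fin Q.length → ℕ)} (h : Tracks Q ord L) :
    ∀ c ∈ L, ∀ j, c j ≤ (Q.get j).length := fun c hc =>
  let ⟨_, _, hrc⟩ := h.1 c hc
  hrc.le_length

end Tracks

variable [DecidableEq B]

theorem usesAtMost_iff_forall_prefix {plt : B → P} {ord : List B} {p : ℕ} :
    UsesAtMost Q plt ord p ↔ ∀ r, r <+: ord → (openAfter Q plt r).ncard ≤ p := by
  constructor
  · intro huse r hr
    rw [List.prefix_iff_eq_take.mp hr]
    exact huse _ hr.length_le
  · intro huse i _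
    exact huse _ (List.take_prefix i ord)

theorem Tracks.usesAtMost_iff (hnd : Q.flatten.Nodup) {plt : B → P} {ord : List B}
    {L : List (Fin Q.length → ℕ)} (h : Tracks Q ord L) {p : ℕ} :
    UsesAtMost Q plt ord p ↔ ∀ c ∈ L, (cutQ Q plt c).ncard ≤ p := by
  rw [usesAtMost_iff_forall_prefix]
  constructor
  · intro huse c hc
    obtain ⟨r, hr, hrc⟩ := h.1 c hc
    rw [← hrc.openAfter_eq_cutQ hnd]
    exact huse r hr
  · intro hcut r hr
    obtain ⟨c, hc, hrc⟩ := h.2 r hr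
    rw [hrc.openAfter_eq_cutQ hnd]
    exact hcut c hc

def RemovesFromFronts (Q : List (List B)) (ord : List B) : Prop :=
  ∀ i (hi : i < ord.length), ∃ q ∈ confAfter Q (ord.take i), q.head? = some ord[i]

theorem removesFromFronts_nil : RemovesFromFronts Q [] :=
  fun _ hi => absurd hi (Nat.not_lt_zero _)

theorem removesFromFronts_concat {ord : List B} {b : B} :
    RemovesFromFronts Q (ord ++ [b]) ↔
      RemovesFromFronts Q ord ∧ ∃ q ∈ confAfter Q ord, q.head? = some b := by
  constructor
  · intro h
    refine ⟨fun i hi => ?_, by simpa using h ord.length (by simp)⟩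
    have := h i (by simp; omega)
    rwa [List.take_append_of_le_length hi.le, List.getElem_append_left hi] at this
  · rintro ⟨h, hb⟩ i hi
    rw [List.length_append, List.length_singleton] at hi
    rcases Nat.lt_succ_iff_lt_or_eq.mp hi with hi | rfl
    · rw [List.take_append_of_le_length hi.le, List.getElem_append_left hi]
      exact h i hi
    · simpa using hb

theorem exists_path_of_removesFromFronts (hnd : Q.flatten.Nodup) (ord : List B)
    (hord : RemovesFromFronts Q ord) :
    ∃ L c, L.head? = some (fun _ => 0) ∧ L.getLast? = some c ∧ L.IsChain (ProcStep Q) ∧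
      RemovedAt Q ord c ∧ Tracks Q ord L := by
  induction ord using List.reverseRecOn with
  | nil => exact ⟨_, _, rfl, rfl, List.isChain_singleton _, RemovedAt.nil, Tracks.nil⟩
  | append_singleton ord b ih =>
    obtain ⟨hord, hb⟩ := removesFromFronts_concat.mp hord
    obtain ⟨L, c, hhead, hlast, hchain, hc, htr⟩ := ih hord
    obtain ⟨j, hj, rfl⟩ := (hc.exists_head_confAfter_iff hnd).mp hb
    have hc' := hc.concat hnd hj
    refine ⟨L ++ [_], _, ?_, List.getLast?_concat, ?_, hc', htr.concat hc'⟩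
    · rw [List.head?_append, hhead]; rfl
    · refine List.isChain_append.mpr ⟨hchain, List.isChain_singleton _, ?_⟩
      simp only [hlast, List.head?_cons, Option.mem_some_iff]
      rintro _ rfl _ rfl
      exact procStep_iff.mpr ⟨j, rfl⟩

theorem exists_removesFromFronts_of_path (hnd : Q.flatten.Nodup) (L : List (Fin Q.length → ℕ))
    (c : Fin Q.length → ℕ) (hhead : L.head? = some (fun _ => 0)) (hlast : L.getLast? = some c)
    (hchain : L.IsChain (ProcStep Q)) (hle : ∀ c ∈ L, ∀ j, c j ≤ (Q.get j).length) :
    ∃ ord, RemovesFromFronts Q ord ∧ RemovedAt Q ord c ∧ Tracks Q ord L := by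
  induction L using List.reverseRecOn generalizing c with
  | nil => simp at hhead
  | append_singleton L c' ih =>
    obtain rfl : c' = c := by simpa using hlast
    cases hL : L.getLast? with
    | none =>
      obtain rfl := List.getLast?_eq_none_iff.mp hL
      obtain rfl : c' = fun _ => 0 := by simpa using hhead
      exact ⟨[], removesFromFronts_nil, RemovedAt.nil, Tracks.nil⟩
    | some c₀ =>
      have hne : L ≠ [] := by rintro rfl; simp at hL
      obtain ⟨hchainL, -, hstep⟩ := List.isChain_append.mp hchain
      obtain ⟨j, rfl⟩ := procStep_iff.mp (hstep c₀ hL c' rfl)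
      obtain ⟨ord, hord, hc, htr⟩ := ih c₀ (by rwa [List.head?_append_of_ne_nil _ hne] at hhead)
        hL hchainL (fun c hc => hle c (List.mem_append_left _ hc))
      have hj : c₀ j < (Q.get j).length := by
        simpa using hle _ (List.mem_append_right _ (List.mem_singleton_self _)) j
      have hc' := hc.concat hnd hj
      refine ⟨_, removesFromFronts_concat.mpr ⟨hord, ?_⟩, hc', htr.concat hc'⟩
      exact (hc.exists_head_confAfter_iff hnd).mpr ⟨j, hj, rfl⟩

end FifoStackUp

open FifoStackUp in
/-- There is a processing of `Q` in which at most `p` pallets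
are open in every configuration if and only if the processing graph of `Q`
contains a directed path from the vertex `(0, …, 0)` to the vertex
`(|q_1|, …, |q_k|)` all of whose vertices `(i_1, …, i_k)` satisfy
`#cut_Q(i_1, …, i_k) ≤ p`. -/
theorem processing_iff_path_in_processing_graph {B P : Type} [DecidableEq B]
    (Q : List (List B)) (plt : B → P) (hnd : Q.flatten.Nodup) (p : ℕ) :
    (∃ ord : List B, IsProcessing Q ord ∧ UsesAtMost Q plt ord p) ↔
    (∃ L : List (Fin Q.length → ℕ),
      L.head? = some (fun _ => 0) ∧
      L.getLast? = some (fun j => (Q.get j).length) ∧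
      List.Chain' (ProcStep Q) L ∧
      (∀ c ∈ L, ∀ j, c j ≤ (Q.get j).length) ∧
      (∀ c ∈ L, (cutQ Q plt c).ncard ≤ p)) := by
  constructor
  · rintro ⟨ord, ⟨hperm, hord⟩, huse⟩
    obtain ⟨L, c, hhead, hlast, hchain, hc, htr⟩ := exists_path_of_removesFromFronts hnd ord hord
    rw [(hc.eq_length_iff_perm hnd).mpr hperm] at hlast
    exact ⟨L, hhead, hlast, hchain, htr.le_length, (htr.usesAtMost_iff hnd).mp huse⟩
  · rintro ⟨L, hhead, hlast, hchain, hle, hcut⟩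
    obtain ⟨ord, hord, hc, htr⟩ := exists_removesFromFronts_of_path hnd L _ hhead hlast hchain hle
    exact ⟨ord, ⟨(hc.eq_length_iff_perm hnd).mp rfl, hord⟩, (htr.usesAtMost_iff hnd).mpr hcut⟩
end
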